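/- Let m > 0. Suppose V : (0, ∞) → (0, ∞) is differentiable with V′(s) > 0 for all s > 0, satisfies V(s)·(1 + V(s)² − V′(s)²) = 2m for all s > 0 (i.e., every slice {s} × S² of the warped product metric ds² + V(s)²g₀ has Hawking mass m), and V(s) → r₀(m) as s → 0⁺. Then V(s) = r_m(s) for all s > 0; that is, the metric is the Schwarzschild anti-de Sitter metric of mass m. -/

import Mathlib

/-!
The Hawking mass condition says that `V` solves the radial equation of Schwarzschild–AdS,
`V′ = √(1 + V² − 2m/V)`, and since `V` increases from `r₀` we have `V > r₀`. By the chain rule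
and the fundamental theorem of calculus, `s_m ∘ V` then has derivative `1` on `(0, ∞)`; the
integrand of `s_m` is integrable at `r₀` because `1 + t² − 2m/t` vanishes only to first order
there, so `s_m ∘ V → 0` as `s → 0⁺`. Hence `s_m (V s) = s`, and applying `r_m` gives `V = r_m`.
-/

open MeasureTheory

/-- The arclength function `s_m(r) = ∫_{r₀}^{r} (1 + t² − 2m/t)^{−1/2} dt`, the
`g_m`-distance from the coordinate sphere `S_r` to the boundary sphere `S_{r₀}` in the
Schwarzschild anti-de Sitter space of mass `m`. -/
noncomputable def sm (m r₀ r : ℝ) : ℝ :=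
  ∫ t in Set.Ioc r₀ r, (Real.sqrt (1 + t ^ 2 - 2 * m / t))⁻¹

open Real Set Filter Topology

theorem StrictMonoOn.lt_of_tendsto_nhdsGT {α β : Type*} [LinearOrder α] [TopologicalSpace α]
    [OrderTopology α] [DenselyOrdered α] [NoMaxOrder α] [Preorder β] [TopologicalSpace β]
    [OrderClosedTopology β] {f : α → β} {a s : α} {L : β} (hf : StrictMonoOn f (Ioi a))
    (hlim : Tendsto f (𝓝[>] a) (𝓝 L)) (hs : a < s) : L < f s := by
  obtain ⟨c, hac, hcs⟩ := exists_between hs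
  have hLc : L ≤ f c := le_of_tendsto hlim <| by
    filter_upwards [Ioo_mem_nhdsGT hac] with x hx
    exact (hf hx.1 hac hx.2).le
  exact hLc.trans_lt (hf hac (hac.trans hcs) hcs)

theorem eq_self_of_hasDerivAt_one {g : ℝ → ℝ} (hg : ∀ s, 0 < s → HasDerivAt g 1 s)
    (hlim : Tendsto g (𝓝[>] 0) (𝓝 0)) {s : ℝ} (hs : 0 < s) : g s = s := by
  obtain ⟨a, ha⟩ := isOpen_Ioi.exists_eq_add_of_deriv_eq isPreconnected_Ioi
    (fun x hx => (hg x hx).differentiableAt.differentiableWithinAt) differentiableOn_id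
    (fun x hx => by simp [(hg x hx).deriv])
  have hlim' : Tendsto g (𝓝[>] 0) (𝓝 (0 + a)) :=
    ((continuous_id.add continuous_const).tendsto 0).mono_left nhdsWithin_le_nhds
      |>.congr' (eventually_nhdsWithin_of_forall fun x hx => (ha hx).symm)
  have ha0 : a = 0 := by simpa using tendsto_nhds_unique hlim' hlim
  simpa [ha0] using ha hs

theorem integrableOn_inv_sqrt_of_mul_sub_le {F : ℝ → ℝ} (hF : Measurable F) {a b c : ℝ}
    (hc : 0 < c) (hle : ∀ t ∈ Ioc a b, c * (t - a) ≤ F t) :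
    IntegrableOn (fun t => (√(F t))⁻¹) (Ioc a b) := by
  have hdom : IntegrableOn (fun t => (√c)⁻¹ * (t - a) ^ (-(1 / 2) : ℝ)) (Ioc a b) := by
    rcases le_or_gt a b with hab | hba
    · have hrpow : IntervalIntegrable (fun t => (t - a) ^ (-(1 / 2) : ℝ)) volume a b := by
        simpa using (intervalIntegral.intervalIntegrable_rpow' (r := -(1 / 2)) (by norm_num)
          (a := 0) (b := b - a)).comp_sub_right a
      simpa [uIoc_of_le hab] using (hrpow.const_mul (√c)⁻¹).1
    · simp [Ioc_eq_empty (not_lt.mpr hba.le)]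
  refine hdom.mono' (by fun_prop) ((ae_restrict_iff' measurableSet_Ioc).2 ?_)
  filter_upwards with t ht
  have hta : 0 < t - a := sub_pos.2 ht.1
  calc ‖(√(F t))⁻¹‖ = (√(F t))⁻¹ := by rw [norm_inv, norm_of_nonneg (sqrt_nonneg _)]
    _ ≤ (√(c * (t - a)))⁻¹ := inv_anti₀ (by positivity) (sqrt_le_sqrt (hle t ht))
    _ = (√c)⁻¹ * (t - a) ^ (-(1 / 2) : ℝ) := by
      rw [sqrt_mul hc.le, mul_inv, rpow_neg hta.le, ← sqrt_eq_rpow]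

noncomputable def sadsPotential (m r : ℝ) : ℝ := 1 + r ^ 2 - 2 * m / r

theorem sm_eq_integral_inv_sqrt_sadsPotential (m r₀ r : ℝ) :
    sm m r₀ r = ∫ t in Ioc r₀ r, (√(sadsPotential m t))⁻¹ := rfl

theorem measurable_sadsPotential (m : ℝ) : Measurable (sadsPotential m) := by
  unfold sadsPotential; fun_prop

theorem continuousAt_sadsPotential (m : ℝ) {r : ℝ} (hr : r ≠ 0) :
    ContinuousAt (sadsPotential m) r := by
  unfold sadsPotential; fun_prop (disch := exact hr)

section Horizon

variable {m r₀ : ℝ} (hr₀ : 0 < r₀) (hroot : r₀ ^ 3 + r₀ = 2 * m)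
include hr₀ hroot

theorem mul_sub_le_sadsPotential {r : ℝ} (hr : r₀ < r) :
    r₀ * (r - r₀) ≤ sadsPotential m r := by
  have hr0 : 0 < r := hr₀.trans hr
  have hfactor : sadsPotential m r = (r - r₀) * (r ^ 2 + r * r₀ + r₀ ^ 2 + 1) / r := by
    unfold sadsPotential; field_simp; linear_combination hroot
  rw [hfactor, le_div_iff₀ hr0]
  nlinarith [mul_pos (mul_pos hr₀ (sub_pos.2 hr)) (add_pos hr0 hr0)]

theorem integrableOn_inv_sqrt_sadsPotential (b : ℝ) :
    IntegrableOn (fun t => (√(sadsPotential m t))⁻¹) (Ioc r₀ b) :=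
  integrableOn_inv_sqrt_of_mul_sub_le (measurable_sadsPotential m) hr₀
    fun _ ht => mul_sub_le_sadsPotential hr₀ hroot ht.1

theorem hasDerivAt_sm {r : ℝ} (hr : r₀ < r) :
    HasDerivAt (sm m r₀) (√(sadsPotential m r))⁻¹ r := by
  have hpos : 0 < sadsPotential m r :=
    (mul_pos hr₀ (sub_pos.2 hr)).trans_le (mul_sub_le_sadsPotential hr₀ hroot hr)
  have hftc := intervalIntegral.integral_hasDerivAt_right
    ((intervalIntegrable_iff_integrableOn_Ioc_of_le hr.le).2
      (integrableOn_inv_sqrt_sadsPotential hr₀ hroot r))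
    (measurable_sadsPotential m).sqrt.inv.stronglyMeasurable.stronglyMeasurableAtFilter
    ((continuousAt_sadsPotential m (hr₀.trans hr).ne').sqrt.inv₀ (sqrt_pos.2 hpos).ne')
  refine hftc.congr_of_eventuallyEq ?_
  filter_upwards [Ioi_mem_nhds hr] with x hx
  rw [sm_eq_integral_inv_sqrt_sadsPotential, intervalIntegral.integral_of_le hx.le]

theorem tendsto_sm_nhdsGE : Tendsto (sm m r₀) (𝓝[≥] r₀) (𝓝 0) := by
  have hcont := intervalIntegral.continuousOn_primitive (μ := volume)
    ((integrableOn_Icc_iff_integrableOn_Ioc).2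
      (integrableOn_inv_sqrt_sadsPotential hr₀ hroot (r₀ + 1)))
  have hr₀_lt : r₀ < r₀ + 1 := lt_add_one r₀
  have h := (hcont r₀ (left_mem_Icc.2 hr₀_lt.le)).tendsto
  rwa [nhdsWithin_Icc_eq_nhdsGE hr₀_lt, Ioc_self, Measure.restrict_empty,
    integral_zero_measure] at h

end Horizon

theorem inv_sqrt_sadsPotential_mul_eq_one {m x y : ℝ} (hx : x ≠ 0) (hy : 0 < y)
    (hmass : x * (1 + x ^ 2 - y ^ 2) = 2 * m) : (√(sadsPotential m x))⁻¹ * y = 1 := by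
  have hpot : sadsPotential m x = y ^ 2 := by
    unfold sadsPotential; field_simp; linear_combination hmass
  rw [hpot, sqrt_sq hy.le, inv_mul_cancel₀ hy.ne']

theorem penrose_stmt13_general (m r₀ : ℝ) (hr₀ : 0 < r₀)
    (hroot : r₀ ^ 3 + r₀ = 2 * m) (rm : ℝ → ℝ)
    (hinv₁ : ∀ r : ℝ, r₀ ≤ r → rm (sm m r₀ r) = r)
    (V : ℝ → ℝ)
    (hVdiff : ∀ s : ℝ, 0 < s → DifferentiableAt ℝ V s)
    (hV'pos : ∀ s : ℝ, 0 < s → 0 < deriv V s)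
    (hmass : ∀ s : ℝ, 0 < s → V s * (1 + (V s) ^ 2 - (deriv V s) ^ 2) = 2 * m)
    (hlim : Filter.Tendsto V (nhdsWithin 0 (Set.Ioi 0)) (nhds r₀)) :
    ∀ s : ℝ, 0 < s → V s = rm s := by
  have hV_gt : ∀ s, 0 < s → r₀ < V s := fun s hs =>
    (strictMonoOn_of_deriv_pos (convex_Ioi 0)
      (fun x hx => (hVdiff x hx).continuousAt.continuousWithinAt)
      (fun x hx => hV'pos x (interior_subset hx))).lt_of_tendsto_nhdsGT hlim hs
  have hderiv : ∀ s, 0 < s → HasDerivAt (fun u => sm m r₀ (V u)) 1 s := fun s hs =>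
    ((hasDerivAt_sm hr₀ hroot (hV_gt s hs)).comp s (hVdiff s hs).hasDerivAt).congr_deriv
      (inv_sqrt_sadsPotential_mul_eq_one (hr₀.trans (hV_gt s hs)).ne' (hV'pos s hs) (hmass s hs))
  have hV_tendsto : Tendsto V (𝓝[>] 0) (𝓝[≥] r₀) :=
    tendsto_nhdsWithin_iff.2 ⟨hlim, eventually_nhdsWithin_of_forall fun s hs => (hV_gt s hs).le⟩
  intro s hs
  rw [← hinv₁ (V s) (hV_gt s hs).le,
    eq_self_of_hasDerivAt_one hderiv ((tendsto_sm_nhdsGE hr₀ hroot).comp hV_tendsto) hs]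

/-- Let `m > 0`.  Suppose `V : (0,∞) → (0,∞)` is differentiable with
`V′(s) > 0` for all `s > 0`, satisfies `V(s)·(1 + V(s)² − V′(s)²) = 2m` for all `s > 0`
(i.e. every slice `{s} × S²` of the warped product metric `ds² + V(s)²g₀` has Hawking
mass `m`), and `V(s) → r₀(m)` as `s → 0⁺`.  Then `V(s) = r_m(s)` for all `s > 0`; that
is, the metric is the Schwarzschild anti-de Sitter metric of mass `m`.  Here `r₀` is
the unique positive real with `r₀³ + r₀ = 2m` and `r_m` is the inverse of the arclength
function `s_m`, expressed by the hypotheses `hinv₁`, `hinv₂`. -/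
theorem penrose_stmt13 (m r₀ : ℝ) (hm : 0 < m) (hr₀ : 0 < r₀)
    (hroot : r₀ ^ 3 + r₀ = 2 * m) (rm : ℝ → ℝ)
    (hinv₁ : ∀ r : ℝ, r₀ ≤ r → rm (sm m r₀ r) = r)
    (hinv₂ : ∀ s : ℝ, 0 ≤ s → r₀ ≤ rm s ∧ sm m r₀ (rm s) = s)
    (V : ℝ → ℝ)
    (hVpos : ∀ s : ℝ, 0 < s → 0 < V s)
    (hVdiff : ∀ s : ℝ, 0 < s → DifferentiableAt ℝ V s)
    (hV'pos : ∀ s : ℝ, 0 < s → 0 < deriv V s)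
    (hmass : ∀ s : ℝ, 0 < s → V s * (1 + (V s) ^ 2 - (deriv V s) ^ 2) = 2 * m)
    (hlim : Filter.Tendsto V (nhdsWithin 0 (Set.Ioi 0)) (nhds r₀)) :
    ∀ s : ℝ, 0 < s → V s = rm s :=
  penrose_stmt13_general m r₀ hr₀ hroot rm hinv₁ V hVdiff hV'pos hmass hlim
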